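/- Let ζ₁,…,ζ_N ∈ ℝ, let ν = (1/N) Σ_{i=1}^N δ_{ζᵢ}, and let ε > 0. Then sup{ E_{ζ∼Q}[ζ] : Q ∈ 𝒫₂(ℝ), W₂(Q, ν) ≤ ε } = (1/N) Σ_{i=1}^N ζᵢ + ε and inf{ E_{ζ∼Q}[ζ] : Q ∈ 𝒫₂(ℝ), W₂(Q, ν) ≤ ε } = (1/N) Σ_{i=1}^N ζᵢ − ε. -/

import Mathlib

open MeasureTheory
open scoped ENNReal

/-- The `p`-th power transport cost of a coupling `π` with ground cost `d`. -/
noncomputable def transportCost {α : Type*} [MeasurableSpace α]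
    (p : ℝ) (d : α → α → ℝ) (π : Measure (α × α)) : ℝ≥0∞ :=
  ∫⁻ w, ENNReal.ofReal (d w.1 w.2 ^ p) ∂π

/-- The `p`-Wasserstein distance between `μ` and `ν` with ground cost `d`:
the infimum of the `p`-th root of the transport cost over all couplings. -/
noncomputable def wassersteinDist {α : Type*} [MeasurableSpace α]
    (p : ℝ) (d : α → α → ℝ) (μ ν : Measure α) : ℝ≥0∞ :=
  (⨅ (π : Measure (α × α)) (_ : IsProbabilityMeasure π ∧
      π.map Prod.fst = μ ∧ π.map Prod.snd = ν), transportCost p d π) ^ (1 / p)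

/-- The empirical distribution of the points `ξ 1, …, ξ N`. -/
noncomputable def empMeasure {α : Type*} [MeasurableSpace α] {N : ℕ}
    (ξ : Fin N → α) : Measure α :=
  (N : ℝ≥0∞)⁻¹ • ∑ i, Measure.dirac (ξ i)

/-- Probability measures on `ℝ` supported on `S`, with finite `p`-th moment, within
`p`-Wasserstein distance (with cost `|·|`) `ε` of `ν`. -/
def realWassersteinBall (p : ℝ) (S : Set ℝ) (ν : Measure ℝ) (ε : ℝ) : Set (Measure ℝ) :=
  {Q | IsProbabilityMeasure Q ∧ Q Sᶜ = 0 ∧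
    (∫⁻ t, ENNReal.ofReal (|t| ^ p) ∂Q) < ⊤ ∧
    wassersteinDist p (fun a b => |a - b|) Q ν ≤ ENNReal.ofReal ε}

/-!
For any coupling `π` of `Q` and `ν`, the difference of the means is `∫ (x - y) dπ`, which is
bounded by the `L¹`- and hence (on a probability space) by the `L²`-norm of `x - y`; so the mean
moves by at most `W₂(Q, ν) ≤ ε`. Translating the empirical distribution by `±ε` costs exactly
`ε` and moves the mean by `±ε`, so both bounds are attained.
-/

section EmpiricalMeasure

variable {α : Type*} [MeasurableSpace α] {N : ℕ}

lemma isProbabilityMeasure_empMeasure (hN : 0 < N) (ξ : Fin N → α) :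
    IsProbabilityMeasure (empMeasure ξ) := by
  constructor
  simp only [empMeasure, Measure.smul_apply, Measure.coe_finsetSum, Finset.sum_apply,
    measure_univ, Finset.sum_const, Finset.card_univ, Fintype.card_fin, nsmul_eq_mul, mul_one,
    smul_eq_mul]
  exact ENNReal.inv_mul_cancel (by simp [hN.ne']) (by simp)

lemma lintegral_empMeasure (ξ : Fin N → α) {f : α → ℝ≥0∞} (hf : Measurable f) :
    ∫⁻ x, f x ∂(empMeasure ξ) = (N : ℝ≥0∞)⁻¹ * ∑ i, f (ξ i) := by
  simp [empMeasure, lintegral_smul_measure, lintegral_finsetSum_measure, lintegral_dirac' _ hf]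

lemma lintegral_empMeasure_lt_top (hN : 0 < N) (ξ : Fin N → α) {f : α → ℝ≥0∞}
    (hf : Measurable f) (hfin : ∀ i, f (ξ i) ≠ ∞) : ∫⁻ x, f x ∂(empMeasure ξ) < ∞ := by
  rw [lintegral_empMeasure ξ hf]
  exact ENNReal.mul_lt_top (by simp [hN]) (ENNReal.sum_lt_top.2 fun i _ => (hfin i).lt_top)

lemma integral_empMeasure (ξ : Fin N → α) {f : α → ℝ} (hf : StronglyMeasurable f) :
    ∫ x, f x ∂(empMeasure ξ) = (N : ℝ)⁻¹ * ∑ i, f (ξ i) := by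
  rw [empMeasure, integral_smul_measure,
    integral_finsetSum_measure fun i _ => integrable_dirac' hf enorm_lt_top]
  simp [integral_dirac' _ _ hf, ENNReal.toReal_inv]

end EmpiricalMeasure

lemma integrable_id_of_lintegral_rpow_two_lt_top {μ : Measure ℝ} [IsFiniteMeasure μ]
    (h : ∫⁻ t, ENNReal.ofReal (|t| ^ (2 : ℝ)) ∂μ < ∞) : Integrable (fun t : ℝ => t) μ := by
  have hsq : Integrable (fun t : ℝ => t ^ 2) μ :=
    ⟨by fun_prop, (hasFiniteIntegral_iff_ofReal (ae_of_all _ fun t => sq_nonneg t)).2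
      (by simpa [Real.rpow_two, sq_abs] using h)⟩
  exact ((memLp_two_iff_integrable_sq aestronglyMeasurable_id).2 hsq).integrable one_le_two

lemma integral_map_add_const {μ : Measure ℝ} [IsProbabilityMeasure μ]
    (hμ : Integrable (fun t : ℝ => t) μ) (c : ℝ) :
    ∫ t, t ∂(μ.map (· + c)) = ∫ t, t ∂μ + c := by
  rw [integral_map (f := fun t : ℝ => t) (measurable_add_const c).aemeasurable
      aestronglyMeasurable_id,
    integral_add hμ (integrable_const c), integral_const, probReal_univ, one_smul]

lemma integral_map_fst_sub_integral_map_snd {π : Measure (ℝ × ℝ)}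
    (h₁ : Integrable (fun t : ℝ => t) (π.map Prod.fst))
    (h₂ : Integrable (fun t : ℝ => t) (π.map Prod.snd)) :
    ∫ t, t ∂(π.map Prod.fst) - ∫ t, t ∂(π.map Prod.snd) = ∫ w, (w.1 - w.2) ∂π := by
  rw [integral_map (f := fun t : ℝ => t) measurable_fst.aemeasurable aestronglyMeasurable_id,
    integral_map (f := fun t : ℝ => t) measurable_snd.aemeasurable aestronglyMeasurable_id]
  exact (integral_sub (h₁.comp_measurable measurable_fst) (h₂.comp_measurable measurable_snd)).symm

lemma transportCost_abs_sub_eq_eLpNorm_rpow {p : ℝ} (hp : 0 < p) (π : Measure (ℝ × ℝ)) :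
    transportCost p (fun a b => |a - b|) π =
      eLpNorm (fun w : ℝ × ℝ => w.1 - w.2) (ENNReal.ofReal p) π ^ p := by
  rw [eLpNorm_eq_lintegral_rpow_enorm_toReal (by simpa using hp) ENNReal.ofReal_ne_top,
    ENNReal.toReal_ofReal hp.le, ← ENNReal.rpow_mul, one_div, inv_mul_cancel₀ hp.ne',
    ENNReal.rpow_one, transportCost]
  simp_rw [Real.enorm_eq_ofReal_abs, ENNReal.ofReal_rpow_of_nonneg (abs_nonneg _) hp.le]

lemma ofReal_abs_integral_sub_rpow_le_transportCost {p : ℝ} (hp : 1 ≤ p)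
    (π : Measure (ℝ × ℝ)) [IsProbabilityMeasure π]
    (h₁ : Integrable (fun t : ℝ => t) (π.map Prod.fst))
    (h₂ : Integrable (fun t : ℝ => t) (π.map Prod.snd)) :
    ENNReal.ofReal |∫ t, t ∂(π.map Prod.fst) - ∫ t, t ∂(π.map Prod.snd)| ^ p ≤
      transportCost p (fun a b => |a - b|) π := by
  rw [transportCost_abs_sub_eq_eLpNorm_rpow (by linarith) π,
    integral_map_fst_sub_integral_map_snd h₁ h₂, ← Real.enorm_eq_ofReal_abs]
  gcongr
  calc ‖∫ w, (w.1 - w.2) ∂π‖ₑ ≤ ∫⁻ w, ‖w.1 - w.2‖ₑ ∂π := enorm_integral_le_lintegral_enorm _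
    _ = eLpNorm (fun w : ℝ × ℝ => w.1 - w.2) 1 π := eLpNorm_one_eq_lintegral_enorm.symm
    _ ≤ eLpNorm (fun w : ℝ × ℝ => w.1 - w.2) (ENNReal.ofReal p) π :=
        eLpNorm_le_eLpNorm_of_exponent_le (by simpa using hp) (by fun_prop)

theorem ofReal_abs_integral_sub_le_wassersteinDist {p : ℝ} (hp : 1 ≤ p) {μ ν : Measure ℝ}
    (hμ : Integrable (fun t : ℝ => t) μ) (hν : Integrable (fun t : ℝ => t) ν) :
    ENNReal.ofReal |∫ t, t ∂μ - ∫ t, t ∂ν| ≤ wassersteinDist p (fun a b => |a - b|) μ ν := by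
  rw [wassersteinDist, one_div, ENNReal.le_rpow_inv_iff (by linarith)]
  refine le_iInf₂ fun π ⟨hπ, hfst, hsnd⟩ => ?_
  subst hfst hsnd
  exact ofReal_abs_integral_sub_rpow_le_transportCost hp π hμ hν

theorem wassersteinDist_map_add_const_le {p : ℝ} (hp : 0 < p) (ν : Measure ℝ)
    [IsProbabilityMeasure ν] (c : ℝ) :
    wassersteinDist p (fun a b => |a - b|) (ν.map (· + c)) ν ≤ ENNReal.ofReal |c| := by
  rw [wassersteinDist, one_div, ENNReal.rpow_inv_le_iff hp,
    ENNReal.ofReal_rpow_of_nonneg (abs_nonneg c) hp.le]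
  have hg : Measurable fun t : ℝ => (t + c, t) := by fun_prop
  have hcost : transportCost p (fun a b => |a - b|) (ν.map fun t => (t + c, t)) =
      ENNReal.ofReal (|c| ^ p) := by
    rw [transportCost, lintegral_map (by fun_prop) hg]
    simp
  refine iInf₂_le_of_le _ ⟨Measure.isProbabilityMeasure_map hg.aemeasurable, ?_, ?_⟩ hcost.le
  · rw [Measure.map_map measurable_fst hg]; rfl
  · rw [Measure.map_map measurable_snd hg]; exact Measure.map_id

lemma integrable_id_empMeasure {N : ℕ} (hN : 0 < N) (ζ : Fin N → ℝ) :
    Integrable (fun t : ℝ => t) (empMeasure ζ) :=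
  have := isProbabilityMeasure_empMeasure hN ζ
  integrable_id_of_lintegral_rpow_two_lt_top
    (lintegral_empMeasure_lt_top hN ζ (by fun_prop) fun _ => ENNReal.ofReal_ne_top)

lemma abs_integral_sub_le_of_mem_realWassersteinBall {N : ℕ} (hN : 0 < N) (ζ : Fin N → ℝ)
    {ε : ℝ} (hε : 0 ≤ ε) {Q : Measure ℝ}
    (hQ : Q ∈ realWassersteinBall 2 Set.univ (empMeasure ζ) ε) :
    |∫ t, t ∂Q - ∫ t, t ∂(empMeasure ζ)| ≤ ε := by
  obtain ⟨hprob, -, hmom, hW⟩ := hQ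
  refine (ENNReal.ofReal_le_ofReal_iff hε).1 (le_trans ?_ hW)
  exact ofReal_abs_integral_sub_le_wassersteinDist one_le_two
    (integrable_id_of_lintegral_rpow_two_lt_top hmom) (integrable_id_empMeasure hN ζ)

lemma map_add_const_mem_realWassersteinBall {N : ℕ} (hN : 0 < N) (ζ : Fin N → ℝ) {c ε : ℝ}
    (hc : |c| ≤ ε) :
    (empMeasure ζ).map (· + c) ∈ realWassersteinBall 2 Set.univ (empMeasure ζ) ε := by
  have := isProbabilityMeasure_empMeasure hN ζ
  refine ⟨Measure.isProbabilityMeasure_map (measurable_add_const c).aemeasurable, by simp,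
    ?_, (wassersteinDist_map_add_const_le two_pos _ c).trans (ENNReal.ofReal_le_ofReal hc)⟩
  rw [lintegral_map (by fun_prop) (measurable_add_const c)]
  exact lintegral_empMeasure_lt_top hN ζ (by fun_prop) fun _ => ENNReal.ofReal_ne_top

/-- Extremal expected values over a `2`-Wasserstein ball around an empirical
distribution on `ℝ`: `sup = mean + ε` and `inf = mean − ε`. -/
theorem statement17 {N : ℕ} (hN : 0 < N)
    (ζ : Fin N → ℝ) (ε : ℝ) (hε : 0 < ε) :
    sSup ((fun Q : Measure ℝ => ((∫ t, t ∂Q : ℝ) : EReal)) ''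
        realWassersteinBall 2 Set.univ (empMeasure ζ) ε) =
      (((1 / (N : ℝ)) * ∑ i, ζ i + ε : ℝ) : EReal) ∧
    sInf ((fun Q : Measure ℝ => ((∫ t, t ∂Q : ℝ) : EReal)) ''
        realWassersteinBall 2 Set.univ (empMeasure ζ) ε) =
      (((1 / (N : ℝ)) * ∑ i, ζ i - ε : ℝ) : EReal) := by
  have hν := isProbabilityMeasure_empMeasure hN ζ
  have hmean : ∫ t, t ∂(empMeasure ζ) = 1 / (N : ℝ) * ∑ i, ζ i := by
    rw [integral_empMeasure (f := fun t : ℝ => t) ζ stronglyMeasurable_id, one_div]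
  have hshift (c : ℝ) (hc : |c| ≤ ε) : ((∫ t, t ∂(empMeasure ζ) + c : ℝ) : EReal) ∈
      (fun Q : Measure ℝ => ((∫ t, t ∂Q : ℝ) : EReal)) ''
        realWassersteinBall 2 Set.univ (empMeasure ζ) ε :=
    ⟨_, map_add_const_mem_realWassersteinBall hN ζ hc,
      by dsimp only; rw [integral_map_add_const (integrable_id_empMeasure hN ζ)]⟩
  have hclose {Q : Measure ℝ} (hQ : Q ∈ realWassersteinBall 2 Set.univ (empMeasure ζ) ε) :=
    abs_le.1 (abs_integral_sub_le_of_mem_realWassersteinBall hN ζ hε.le hQ)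
  rw [← hmean]
  constructor
  · refine IsGreatest.csSup_eq ⟨hshift ε (abs_of_pos hε).le, ?_⟩
    rintro _ ⟨Q, hQ, rfl⟩
    exact EReal.coe_le_coe_iff.2 (by linarith [hclose hQ])
  · have hlow := hshift (-ε) (by rw [abs_neg, abs_of_pos hε])
    rw [← sub_eq_add_neg] at hlow
    refine IsLeast.csInf_eq ⟨hlow, ?_⟩
    rintro _ ⟨Q, hQ, rfl⟩
    exact EReal.coe_le_coe_iff.2 (by linarith [hclose hQ])
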